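/- For k ≥ 3 and 0 ≤ v < |I_{k-2}|, writing c_k = 2^{k-1} + a_{k-2}, the Stern polynomials satisfy deg(B_{c_k + v}) = deg(B_{2^{k-2} - (a_{k-2} + v)}) + 1 and lc(B_{c_k + v}) = lc(B_{2^{k-2} - (a_{k-2} + v)}) + lc(B_{a_{k-2} + v}). -/

import Mathlib

open Polynomial in
/-- The Stern polynomial: `B 0 = 0`, `B 1 = 1`, `B (2n) = t * B n`, `B (2n+1) = B n + B (n+1)`. -/
noncomputable def sternP : ℕ → Polynomial ℕ
  | 0 => 0
  | 1 => 1
  | n + 2 =>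
    if (n + 2) % 2 = 0 then X * sternP (n / 2 + 1)
    else sternP (n / 2 + 1) + sternP (n / 2 + 2)
decreasing_by all_goals omega

/-- The digits of a BSD representation lie in {-1, 0, 1}. -/
def IsBSDDigits {i : ℕ} (b : Fin i → ℤ) : Prop := ∀ j, b j ∈ ({-1, 0, 1} : Set ℤ)

/-- The value represented by the digit string `b` (least significant digit `b 0`). -/
def bsdVal {i : ℕ} (b : Fin i → ℤ) : ℤ := ∑ j : Fin i, b j * 2 ^ (j : ℕ)

/-- `b` is a (not necessarily reduced) non-adjacent form digit string of length `k`: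
digits in {-1,0,1}, no two adjacent digits both nonzero, and nonzero leading digit
(when `k > 0`). -/
def IsReducedNAF {k : ℕ} (b : Fin k → ℤ) : Prop :=
  IsBSDDigits b ∧
  (∀ j : Fin k, ∀ h : (j : ℕ) + 1 < k, b j = 0 ∨ b ⟨(j : ℕ) + 1, h⟩ = 0) ∧
  (∀ h : 0 < k, b ⟨k - 1, Nat.sub_lt h one_pos⟩ ≠ 0)

/-- `m` has a reduced NAF representation of bitlength `k`. -/
def HasNAFLen (m : ℤ) (k : ℕ) : Prop :=
  ∃ b : Fin k → ℤ, IsReducedNAF b ∧ bsdVal b = m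

/-- `I k`: the set of positive integers of NAF-bitlength `k`. -/
def NAFInterval (k : ℕ) : Set ℕ := {n : ℕ | HasNAFLen (n : ℤ) k}

/-- `a k = min I k`: `a 1 = 1`, `a 2 = 2`, `a k = 2^(k-2) + a (k-2)`. -/
def aseq : ℕ → ℕ
  | 0 => 0
  | 1 => 1
  | 2 => 2
  | k + 3 => 2 ^ (k + 1) + aseq (k + 1)

/-- The NAF-bitlength of `n`. -/
noncomputable def nafLen (n : ℕ) : ℕ := sInf {k : ℕ | HasNAFLen (n : ℤ) k}

/-- The minimal Hamming weight of a BSD representation of `n` of length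
equal to its NAF-bitlength. -/
noncomputable def minWeight (n : ℕ) : ℕ :=
  sInf {w : ℕ | ∃ b : Fin (nafLen n) → ℤ,
    IsBSDDigits b ∧ bsdVal b = (n : ℤ) ∧ {j | b j ≠ 0}.ncard = w}

/-- `Z n`: the number of zeros in an optimal (minimal-weight) BSD representation of `n`
of length equal to its NAF-bitlength. -/
noncomputable def Zfun (n : ℕ) : ℕ := nafLen n - minWeight n

/-- `M n`: the number of optimal (minimal-weight) BSD representations of `n`
of length equal to its NAF-bitlength. -/
noncomputable def Mfun (n : ℕ) : ℕ :=
  {b : Fin (nafLen n) → ℤ |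
    IsBSDDigits b ∧ bsdVal b = (n : ℤ) ∧ {j | b j ≠ 0}.ncard = minWeight n}.ncard

/-!
Iterating `B (2n) = t B n` and `B (2n+1) = B n + B (n+1)` gives `B (2^k + r) = B (2^k - r) + t B r`
for `r ≤ 2^k`; applied twice, `B (2^(m+1) + u) = B u + t (B (2^m - u) + B u)` for `u ≤ 2^m`.
A non-adjacent digit string of length `m` has absolute value below `a (m+1)`, so `I m` lies in
`[a m, a (m+1))`, and on that interval the reflection `u ↦ 2^m - u` preserves `deg B u` (induction
on `m`, halving `u`). Hence the two summands in the bracket have equal degree, and their leading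
coefficients, being natural numbers, add up without cancellation.
-/

open Polynomial

namespace Polynomial

variable {R : Type*} [Semiring R] {p q : R[X]}

theorem natDegree_add_eq_max_of_leadingCoeff_add_ne_zero
    (h : p.leadingCoeff + q.leadingCoeff ≠ 0) :
    (p + q).natDegree = max p.natDegree q.natDegree := by
  rcases lt_trichotomy p.natDegree q.natDegree with hlt | heq | hgt
  · rw [natDegree_add_eq_right_of_natDegree_lt hlt, max_eq_right hlt.le]
  · refine le_antisymm (natDegree_add_le p q) ?_
    rw [heq, max_self]
    apply le_natDegree_of_ne_zero
    rwa [coeff_add, ← heq, coeff_natDegree, heq, coeff_natDegree]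
  · rw [natDegree_add_eq_left_of_natDegree_lt hgt, max_eq_left hgt.le]

theorem natDegree_leadingCoeff_add_X_mul_add (hdeg : p.degree = q.degree)
    (hlc : p.leadingCoeff + q.leadingCoeff ≠ 0) :
    (q + X * (p + q)).natDegree = p.natDegree + 1 ∧
      (q + X * (p + q)).leadingCoeff = p.leadingCoeff + q.leadingCoeff := by
  have : Nontrivial R := ⟨⟨_, 0, hlc⟩⟩
  have hsum_deg : (p + q).natDegree = p.natDegree := by
    apply natDegree_eq_of_degree_eq
    rw [degree_add_eq_of_leadingCoeff_add_ne_zero hlc, hdeg, max_self]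
  have hsum_lc : (p + q).leadingCoeff = p.leadingCoeff + q.leadingCoeff :=
    leadingCoeff_add_of_degree_eq hdeg hlc
  have hsum_ne : p + q ≠ 0 := by
    rw [← leadingCoeff_ne_zero, hsum_lc]; exact hlc
  have hX_deg : (X * (p + q)).natDegree = p.natDegree + 1 := by
    rw [natDegree_X_mul hsum_ne, hsum_deg]
  have hq_lt : q.natDegree < (X * (p + q)).natDegree := by
    rw [hX_deg, natDegree_eq_of_degree_eq hdeg.symm]; omega
  refine ⟨by rw [natDegree_add_eq_right_of_natDegree_lt hq_lt, hX_deg], ?_⟩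
  rw [leadingCoeff_add_of_degree_lt (degree_lt_degree hq_lt), X_mul, leadingCoeff_mul_X, hsum_lc]

end Polynomial

theorem sternP_two_mul (n : ℕ) : sternP (2 * n) = X * sternP n := by
  match n with
  | 0 => simp [sternP]
  | n + 1 =>
    rw [show 2 * (n + 1) = 2 * n + 2 by ring, sternP]
    simp [Nat.mul_mod_right]

theorem sternP_two_mul_add_one (n : ℕ) : sternP (2 * n + 1) = sternP n + sternP (n + 1) := by
  match n with
  | 0 => simp [sternP]
  | n + 1 =>
    rw [show 2 * (n + 1) + 1 = 2 * n + 1 + 2 by ring, sternP]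
    simp [show (2 * n + 1 + 2) % 2 = 1 by omega, show (2 * n + 1) / 2 = n by omega]

theorem sternP_ne_zero {n : ℕ} (hn : n ≠ 0) : sternP n ≠ 0 := by
  induction n using Nat.strong_induction_on with
  | _ n ih =>
  obtain ⟨s, rfl | rfl⟩ := Nat.even_or_odd' n
  · rw [sternP_two_mul]
    exact mul_ne_zero X_ne_zero (ih s (by omega) (by omega))
  · rcases Nat.eq_zero_or_pos s with rfl | hs
    · simp [sternP]
    rw [sternP_two_mul_add_one]
    intro h
    refine ih (s + 1) (by omega) (by omega) (Polynomial.ext fun i => ?_)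
    have := congrArg (coeff · i) h
    simp only [coeff_add, coeff_zero] at this ⊢
    omega

theorem natDegree_sternP_two_mul {n : ℕ} (hn : n ≠ 0) :
    (sternP (2 * n)).natDegree = (sternP n).natDegree + 1 := by
  rw [sternP_two_mul, natDegree_X_mul (sternP_ne_zero hn)]

theorem natDegree_sternP_two_mul_add_one (n : ℕ) :
    (sternP (2 * n + 1)).natDegree = max (sternP n).natDegree (sternP (n + 1)).natDegree := by
  rw [sternP_two_mul_add_one, natDegree_add_eq_max_of_leadingCoeff_add_ne_zero]
  have := leadingCoeff_ne_zero.mpr (sternP_ne_zero (n := n + 1) (by omega))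
  omega

theorem sternP_two_pow_add {k r : ℕ} (hr : r ≤ 2 ^ k) :
    sternP (2 ^ k + r) = sternP (2 ^ k - r) + X * sternP r := by
  induction k generalizing r with
  | zero =>
    interval_cases r <;> simp [sternP]
  | succ k ih =>
    have hpow : 2 ^ (k + 1) = 2 * 2 ^ k := by ring
    obtain ⟨s, rfl | rfl⟩ := Nat.even_or_odd' r
    · rw [show 2 ^ (k + 1) + 2 * s = 2 * (2 ^ k + s) by omega,
        show 2 ^ (k + 1) - 2 * s = 2 * (2 ^ k - s) by omega,
        sternP_two_mul, sternP_two_mul, sternP_two_mul, ih (by omega)]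
      ring
    · rw [show 2 ^ (k + 1) + (2 * s + 1) = 2 * (2 ^ k + s) + 1 by omega,
        show 2 ^ (k + 1) - (2 * s + 1) = 2 * (2 ^ k - (s + 1)) + 1 by omega,
        sternP_two_mul_add_one, sternP_two_mul_add_one, sternP_two_mul_add_one,
        show 2 ^ k + s + 1 = 2 ^ k + (s + 1) by ring, ih (by omega), ih (by omega),
        show 2 ^ k - (s + 1) + 1 = 2 ^ k - s by omega]
      ring

theorem sternP_two_pow_succ_add {m u : ℕ} (hu : u ≤ 2 ^ m) :
    sternP (2 ^ (m + 1) + u) = sternP u + X * (sternP (2 ^ m - u) + sternP u) := by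
  have hpow : 2 ^ (m + 1) = 2 ^ m + 2 ^ m := by ring
  rw [sternP_two_pow_add (by omega), show 2 ^ (m + 1) - u = 2 ^ m + (2 ^ m - u) by omega,
    sternP_two_pow_add (by omega), Nat.sub_sub_self hu]
  ring

theorem three_mul_aseq_add_mod_two {m : ℕ} (hm : 1 ≤ m) : 3 * aseq m + m % 2 = 2 ^ m + 2 := by
  induction m using aseq.induct with
  | case1 => omega
  | case2 => rfl
  | case3 => rfl
  | case4 k ih =>
    have := ih (by omega)
    have : 2 ^ (k + 3) = 4 * 2 ^ (k + 1) := by ring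
    rw [aseq]
    omega

theorem aseq_add_aseq_succ {m : ℕ} (hm : 1 ≤ m) : aseq m + aseq (m + 1) = 2 ^ m + 1 := by
  have := three_mul_aseq_add_mod_two hm
  have := three_mul_aseq_add_mod_two (m := m + 1) (by omega)
  have : 2 ^ (m + 1) = 2 * 2 ^ m := by ring
  omega

theorem aseq_succ_add_one {m : ℕ} (hm : 1 ≤ m) : aseq (m + 1) + 1 = 2 * aseq m + m % 2 := by
  have := three_mul_aseq_add_mod_two hm
  have := three_mul_aseq_add_mod_two (m := m + 1) (by omega)
  have : 2 ^ (m + 1) = 2 * 2 ^ m := by ring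
  omega

theorem one_le_aseq {m : ℕ} (hm : 1 ≤ m) : 1 ≤ aseq m := by
  have := three_mul_aseq_add_mod_two hm
  have := Nat.one_le_two_pow (n := m)
  omega

theorem aseq_succ_le_two_pow (m : ℕ) : aseq (m + 1) ≤ 2 ^ m := by
  rcases Nat.eq_zero_or_pos m with rfl | hm
  · rfl
  · have := aseq_add_aseq_succ hm
    have := one_le_aseq hm
    omega

theorem natDegree_sternP_aseq {k : ℕ} (hk : 1 ≤ k) :
    (sternP (aseq k)).natDegree = k / 2 ∧ (sternP (aseq k - 1)).natDegree = (k - 1) / 2 := by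
  induction k, hk using Nat.le_induction with
  | base => simp [aseq, sternP]
  | succ k hk ih =>
    obtain ⟨hd, hd'⟩ := ih
    have hrec := aseq_succ_add_one hk
    have hpos := one_le_aseq hk
    rcases Nat.mod_two_eq_zero_or_one k with hpar | hpar
    · have hpow : 2 ^ 2 ≤ 2 ^ k := Nat.pow_le_pow_right two_pos (by omega)
      have := three_mul_aseq_add_mod_two hk
      rw [show aseq (k + 1) = 2 * (aseq k - 1) + 1 by omega,
        show 2 * (aseq k - 1) + 1 - 1 = 2 * (aseq k - 1) by omega,
        natDegree_sternP_two_mul_add_one, natDegree_sternP_two_mul (by omega),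
        Nat.sub_add_cancel hpos, hd, hd']
      omega
    · rw [show aseq (k + 1) = 2 * aseq k by omega,
        show 2 * aseq k - 1 = 2 * (aseq k - 1) + 1 by omega,
        natDegree_sternP_two_mul_add_one, natDegree_sternP_two_mul (by omega),
        Nat.sub_add_cancel hpos, hd, hd']
      omega

theorem natDegree_sternP_two_pow_sub {m u : ℕ} (hm : 1 ≤ m) (hu : aseq m ≤ u)
    (hu' : u < aseq (m + 1)) : (sternP (2 ^ m - u)).natDegree = (sternP u).natDegree := by
  induction m, hm using Nat.le_induction generalizing u with
  | base =>
    obtain rfl : u = 1 := by simp only [aseq] at hu hu'; omega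
    rfl
  | succ m hm ih =>
    rw [show m + 1 + 1 = m + 2 from rfl] at hu'
    have hedge : (sternP (aseq (m + 2) - 1)).natDegree = (sternP (aseq (m + 1))).natDegree := by
      rw [(natDegree_sternP_aseq (k := m + 2) (by omega)).2,
        (natDegree_sternP_aseq (k := m + 1) (by omega)).1]
      omega
    have : aseq (m + 1) + aseq (m + 2) = 2 ^ (m + 1) + 1 := aseq_add_aseq_succ (by omega)
    have := aseq_succ_add_one hm
    have : aseq (m + 2) + 1 = 2 * aseq (m + 1) + (m + 1) % 2 := aseq_succ_add_one (by omega)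
    have := aseq_succ_le_two_pow m
    have := one_le_aseq hm
    have hpow : 2 ^ (m + 1) = 2 * 2 ^ m := by ring
    -- Halving keeps `u` in `[a m, a (m+1))` except at the two endpoints, which the reflection swaps.
    rcases eq_or_ne u (aseq (m + 1)) with rfl | h₁
    · rw [show 2 ^ (m + 1) - aseq (m + 1) = aseq (m + 2) - 1 by omega, hedge]
    rcases eq_or_ne u (aseq (m + 2) - 1) with rfl | h₂
    · rw [show 2 ^ (m + 1) - (aseq (m + 2) - 1) = aseq (m + 1) by omega, hedge]
    obtain ⟨s, rfl | rfl⟩ := Nat.even_or_odd' u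
    · rw [show 2 ^ (m + 1) - 2 * s = 2 * (2 ^ m - s) by omega,
        natDegree_sternP_two_mul (by omega), natDegree_sternP_two_mul (by omega),
        ih (by omega) (by omega)]
    · rw [show 2 ^ (m + 1) - (2 * s + 1) = 2 * (2 ^ m - (s + 1)) + 1 by omega,
        natDegree_sternP_two_mul_add_one, natDegree_sternP_two_mul_add_one,
        show 2 ^ m - (s + 1) + 1 = 2 ^ m - s by omega, ih (u := s) (by omega) (by omega),
        ih (u := s + 1) (by omega) (by omega), max_comm]

def IsNonAdjacent {k : ℕ} (b : Fin k → ℤ) : Prop :=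
  ∀ j : Fin k, ∀ h : (j : ℕ) + 1 < k, b j = 0 ∨ b ⟨(j : ℕ) + 1, h⟩ = 0

theorem IsBSDDigits.abs_le_one {k : ℕ} {b : Fin k → ℤ} (hb : IsBSDDigits b) (j : Fin k) :
    |b j| ≤ 1 := by
  rcases hb j with h | h | h <;> simp_all

theorem IsBSDDigits.init {n : ℕ} {b : Fin (n + 1) → ℤ} (hb : IsBSDDigits b) :
    IsBSDDigits (Fin.init b) :=
  fun j => hb j.castSucc

theorem IsNonAdjacent.init {n : ℕ} {b : Fin (n + 1) → ℤ} (hb : IsNonAdjacent b) :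
    IsNonAdjacent (Fin.init b) :=
  fun j h => hb j.castSucc (by simp only [Fin.val_castSucc]; omega)

theorem bsdVal_eq_bsdVal_init_add {n : ℕ} (b : Fin (n + 1) → ℤ) :
    bsdVal b = bsdVal (Fin.init b) + b (Fin.last n) * 2 ^ n := by
  simp [bsdVal, Fin.sum_univ_castSucc, Fin.init]

theorem bsdVal_eq_of_last_ne_zero {n : ℕ} {b : Fin (n + 2) → ℤ} (hb : IsNonAdjacent b)
    (h : b (Fin.last (n + 1)) ≠ 0) :
    bsdVal b = bsdVal (Fin.init (Fin.init b)) + b (Fin.last (n + 1)) * 2 ^ (n + 1) := by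
  have hprev : Fin.init b (Fin.last n) = 0 := (hb ⟨n, by omega⟩ (Nat.lt_succ_self _)).resolve_right h
  rw [bsdVal_eq_bsdVal_init_add, bsdVal_eq_bsdVal_init_add (Fin.init b), hprev, zero_mul, add_zero]

theorem abs_bsdVal_lt_aseq :
    ∀ {k : ℕ} {b : Fin k → ℤ}, IsBSDDigits b → IsNonAdjacent b → |bsdVal b| < aseq (k + 1)
  | 0, b, _, _ => by simp [bsdVal, aseq]
  | 1, b, hb, _ => by
    have := hb.abs_le_one 0
    simp [bsdVal, aseq]
    linarith
  | n + 2, b, hb, hna => by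
    have hrec : (aseq (n + 3) : ℤ) = 2 ^ (n + 1) + aseq (n + 1) := by simp [aseq]
    rcases eq_or_ne (b (Fin.last (n + 1))) 0 with h | h
    · have hlt : |bsdVal (Fin.init b)| < aseq (n + 2) := abs_bsdVal_lt_aseq hb.init hna.init
      have hle : (aseq (n + 2) : ℤ) ≤ 2 ^ (n + 1) := by exact_mod_cast aseq_succ_le_two_pow (n + 1)
      rw [bsdVal_eq_bsdVal_init_add, h, zero_mul, add_zero, hrec]
      linarith [(aseq (n + 1)).cast_nonneg (α := ℤ)]
    · have hlt := abs_bsdVal_lt_aseq hb.init.init hna.init.init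
      have hdigit := hb.abs_le_one (Fin.last (n + 1))
      rw [bsdVal_eq_of_last_ne_zero hna h, hrec]
      calc |bsdVal (Fin.init (Fin.init b)) + b (Fin.last (n + 1)) * 2 ^ (n + 1)|
          ≤ |bsdVal (Fin.init (Fin.init b))| + |b (Fin.last (n + 1))| * 2 ^ (n + 1) :=
            (abs_add_le _ _).trans_eq (by rw [abs_mul, abs_pow, abs_two])
        _ < 2 ^ (n + 1) + aseq (n + 1) := by nlinarith [pow_pos (two_pos (α := ℤ)) (n + 1)]

theorem NAFInterval_subset_Ico {k : ℕ} (hk : 1 ≤ k) :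
    NAFInterval k ⊆ Set.Ico (aseq k) (aseq (k + 1)) := by
  obtain ⟨j, rfl⟩ : ∃ j, k = j + 1 := ⟨k - 1, by omega⟩
  rintro n ⟨b, ⟨hb, hna, htop⟩, hval⟩
  replace hna : IsNonAdjacent b := hna
  replace htop : b (Fin.last j) ≠ 0 := htop (by omega)
  have hupper := abs_bsdVal_lt_aseq hb hna
  rw [hval] at hupper
  refine ⟨?_, by exact_mod_cast (abs_lt.mp hupper).2⟩
  have hdigit := hb (Fin.last j)
  simp only [Set.mem_insert_iff, Set.mem_singleton_iff] at hdigit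
  rcases j with _ | i
  · simp [bsdVal] at hval
    simp only [Fin.last_zero] at hdigit htop
    show 1 ≤ n
    omega
  · show aseq (i + 2) ≤ n
    rw [bsdVal_eq_of_last_ne_zero hna htop] at hval
    have hlow := abs_lt.mp (abs_bsdVal_lt_aseq hb.init.init hna.init.init)
    have hsum : (aseq (i + 1) : ℤ) + aseq (i + 2) = 2 ^ (i + 1) + 1 := by
      exact_mod_cast aseq_add_aseq_succ (m := i + 1) (by omega)
    have := one_le_aseq (m := i + 2) (by omega)
    zify
    rcases hdigit with hd | hd | hd <;> rw [hd] at hval <;> omega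

theorem ncard_NAFInterval_le {k : ℕ} (hk : 1 ≤ k) :
    (NAFInterval k).ncard ≤ aseq (k + 1) - aseq k := by
  simpa using Set.ncard_le_ncard (NAFInterval_subset_Ico hk) (Set.finite_Ico _ _)

theorem stern_deg_lc_C (k v : ℕ) (hk : 3 ≤ k)
    (hv : v < (NAFInterval (k - 2)).ncard) :
    (sternP (2 ^ (k - 1) + aseq (k - 2) + v)).natDegree
      = (sternP (2 ^ (k - 2) - (aseq (k - 2) + v))).natDegree + 1 ∧
    (sternP (2 ^ (k - 1) + aseq (k - 2) + v)).leadingCoeff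
      = (sternP (2 ^ (k - 2) - (aseq (k - 2) + v))).leadingCoeff
        + (sternP (aseq (k - 2) + v)).leadingCoeff := by
  obtain ⟨m, rfl⟩ : ∃ m, k = m + 2 := ⟨k - 2, by omega⟩
  have hm : 1 ≤ m := by omega
  rw [show m + 2 - 1 = m + 1 by omega, Nat.add_sub_cancel] at *
  have hu : aseq m + v < aseq (m + 1) := by
    have := ncard_NAFInterval_le hm
    omega
  have hu_lt : aseq m + v < 2 ^ m := hu.trans_le (aseq_succ_le_two_pow m)
  have hdeg := natDegree_sternP_two_pow_sub hm (Nat.le_add_right _ _) hu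
  have hne := sternP_ne_zero (n := aseq m + v) (by have := one_le_aseq hm; omega)
  have hne' := sternP_ne_zero (n := 2 ^ m - (aseq m + v)) (by omega)
  rw [add_assoc, sternP_two_pow_succ_add hu_lt.le]
  refine natDegree_leadingCoeff_add_X_mul_add ?_ ?_
  · rw [degree_eq_natDegree hne, degree_eq_natDegree hne', hdeg]
  · have := leadingCoeff_ne_zero.mpr hne
    omega
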